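/- arXiv:2404.00609 — 3 statements merged into one kernel-verified Lean document; each statement's English description precedes it below -/
import Mathlib

section
/- Let Ω ⊆ ℝⁿ be an open set, let u and w be strictly convex functions on Ω (every point of Ω is a strictly convex point of u and of w), let V be an open set with compact closure contained in Ω, and let δ > 0. Assume u ≤ w ≤ u + δ on V and u = w on ∂V. Then ∂w(V) ⊆ ∂u(V), and u*(p) − δ ≤ w*(p) ≤ u*(p) for every p ∈ ∂w(V), where u* and w* are the Legendre transforms of u and w. -/
open MeasureTheory Set
open scoped RealInnerProductSpace ENNReal

noncomputable section

abbrev En (n : ℕ) := EuclideanSpace ℝ (Fin n)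

/-- The subgradient of `u` (as a convex function on `Ω`) at `x`. -/
def subgrad {n : ℕ} (Ω : Set (En n)) (u : En n → ℝ) (x : En n) : Set (En n) :=
  {p | ∀ y ∈ Ω, u x + ⟪p, y - x⟫ ≤ u y}

/-- `x₀` is a strictly convex point of `u` on `Ω`. -/
def IsStrictConvexPt {n : ℕ} (Ω : Set (En n)) (u : En n → ℝ) (x₀ : En n) : Prop :=
  ∀ x ∈ Ω, x ≠ x₀ → u ((1/2 : ℝ) • (x + x₀)) < (u x + u x₀) / 2

/-- The Legendre transform of `u` (as a function on `Ω`). -/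
def legendreT {n : ℕ} (Ω : Set (En n)) (u : En n → ℝ) (p : En n) : ℝ :=
  sSup ((fun x => ⟪x, p⟫ - u x) '' Ω)

lemma subgrad_key {n : ℕ} {Ω : Set (En n)} {u : En n → ℝ} {p x₀ : En n}
    (hp : p ∈ subgrad Ω u x₀) {y : En n} (hy : y ∈ Ω) :
    ⟪y, p⟫ - u y ≤ ⟪x₀, p⟫ - u x₀ := by
  have h := hp y hy
  have h2 : ⟪p, y - x₀⟫ = ⟪p, y⟫ - ⟪p, x₀⟫ := inner_sub_right _ _ _
  have h3 : ⟪y, p⟫ = ⟪p, y⟫ := real_inner_comm _ _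
  have h4 : ⟪x₀, p⟫ = ⟪p, x₀⟫ := real_inner_comm _ _
  rw [h2] at h; linarith

lemma subgrad_bdd {n : ℕ} {Ω : Set (En n)} {u : En n → ℝ} {p x₀ : En n}
    (hp : p ∈ subgrad Ω u x₀) :
    BddAbove ((fun x => ⟪x, p⟫ - u x) '' Ω) := by
  refine ⟨⟪x₀, p⟫ - u x₀, ?_⟩
  rintro _ ⟨y, hy, rfl⟩
  exact subgrad_key hp hy

lemma legendre_eq {n : ℕ} {Ω : Set (En n)} {u : En n → ℝ} {p x₀ : En n}
    (hx : x₀ ∈ Ω) (hp : p ∈ subgrad Ω u x₀) :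
    legendreT Ω u p = ⟪x₀, p⟫ - u x₀ := by
  refine le_antisymm (csSup_le (⟨_, ⟨x₀, hx, rfl⟩⟩) ?_) (le_csSup (subgrad_bdd hp) ⟨x₀, hx, rfl⟩)
  rintro _ ⟨y, hy, rfl⟩
  exact subgrad_key hp hy

/-- Lemma 3.3 (Lemma `lem:legendre t 1`): if `u ≤ w ≤ u + δ` on `V ⊂⊂ Ω` with `u = w`
on `∂V`, then `∂w(V) ⊆ ∂u(V)` and `u* − δ ≤ w* ≤ u*` on `∂w(V)`. -/
theorem statement_13 {n : ℕ} (Ω : Set (En n)) (hΩo : IsOpen Ω)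
    (u w : En n → ℝ) (hu : ConvexOn ℝ Ω u) (hw : ConvexOn ℝ Ω w)
    (husc : ∀ x ∈ Ω, IsStrictConvexPt Ω u x) (hwsc : ∀ x ∈ Ω, IsStrictConvexPt Ω w x)
    (V : Set (En n)) (hVo : IsOpen V) (hVc : IsCompact (closure V)) (hVΩ : closure V ⊆ Ω)
    (δ : ℝ) (hδ : 0 < δ)
    (hlow : ∀ x ∈ V, u x ≤ w x) (hupp : ∀ x ∈ V, w x ≤ u x + δ)
    (hbd : ∀ x ∈ frontier V, u x = w x) :
    (⋃ x ∈ V, subgrad Ω w x) ⊆ (⋃ x ∈ V, subgrad Ω u x) ∧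
    ∀ p ∈ ⋃ x ∈ V, subgrad Ω w x,
      legendreT Ω u p - δ ≤ legendreT Ω w p ∧ legendreT Ω w p ≤ legendreT Ω u p := by
  -- key step: for every p in ∂w(V) there are x₀, x₁ ∈ V with p ∈ ∂w(x₀) ∩ ∂u(x₁)
  have key : ∀ p ∈ ⋃ x ∈ V, subgrad Ω w x,
      ∃ x₀ ∈ V, ∃ x₁ ∈ V, p ∈ subgrad Ω w x₀ ∧ p ∈ subgrad Ω u x₁ := by
    intro p hp
    simp only [mem_iUnion] at hp
    obtain ⟨x₀, hx₀V, hp₀⟩ := hp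
    refine ⟨x₀, hx₀V, ?_⟩
    set f : En n → ℝ := fun y => u y - ⟪p, y⟫ with hf
    -- f is convex on Ω
    have hfconv : ConvexOn ℝ Ω f := by
      refine ⟨hu.1, fun x hx y hy a b ha hb hab => ?_⟩
      have h1 := hu.2 hx hy ha hb hab
      have h2 : ⟪p, a • x + b • y⟫ = a * ⟪p, x⟫ + b * ⟪p, y⟫ := by
        rw [inner_add_right, real_inner_smul_right, real_inner_smul_right]
      simp only [smul_eq_mul] at h1
      simp only [hf, smul_eq_mul, h2]
      linarith
    -- f continuous on closure V
    have hfc : ContinuousOn f (closure V) := by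
      have hcu : ContinuousOn u Ω := hu.continuousOn hΩo
      have : ContinuousOn f Ω := by
        apply hcu.sub
        exact (continuous_const.inner continuous_id).continuousOn
      exact this.mono hVΩ
    obtain ⟨x₁, hx₁K, hmin⟩ := hVc.exists_isMinOn ⟨x₀, subset_closure hx₀V⟩ hfc
    have hmin' : ∀ y ∈ closure V, f x₁ ≤ f y := fun y hy => hmin hy
    -- a minimizer z of f over closure V lying in V
    have hz : ∃ z ∈ V, ∀ y ∈ closure V, f z ≤ f y := by
      by_cases hx₁V : x₁ ∈ V
      · exact ⟨x₁, hx₁V, hmin'⟩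
      · have hfr : x₁ ∈ frontier V := by
          rw [hVo.frontier_eq]; exact ⟨hx₁K, hx₁V⟩
        have heq : u x₁ = w x₁ := hbd x₁ hfr
        have hsub := hp₀ x₁ (hVΩ hx₁K)
        have h2 : ⟪p, x₁ - x₀⟫ = ⟪p, x₁⟫ - ⟪p, x₀⟫ := inner_sub_right _ _ _
        have hlow0 := hlow x₀ hx₀V
        have hfx : f x₀ ≤ f x₁ := by simp only [hf]; rw [h2] at hsub; linarith
        exact ⟨x₀, hx₀V, fun y hy => le_trans hfx (hmin' y hy) |>.trans' (le_refl _) |>.trans (le_refl _) |>.trans (le_refl _) |>.trans (le_refl _)⟩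
    obtain ⟨z, hzV, hzmin⟩ := hz
    refine ⟨z, hzV, hp₀, ?_⟩
    -- p is a subgradient of u at z
    intro y hy
    have hzΩ : z ∈ Ω := hVΩ (subset_closure hzV)
    -- want: u z + ⟪p, y - z⟫ ≤ u y, i.e. f z ≤ f y
    have hgoal : f z ≤ f y → u z + ⟪p, y - z⟫ ≤ u y := by
      intro h
      have h2 : ⟪p, y - z⟫ = ⟪p, y⟫ - ⟪p, z⟫ := inner_sub_right _ _ _
      simp only [hf] at h; linarith [h, h2.le, h2.ge]
    apply hgoal
    by_cases hyz : y = z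
    · simp [hyz]
    -- pick small t with (1-t)•z + t•y ∈ V
    obtain ⟨ε, hε, hball⟩ := Metric.isOpen_iff.1 hVo z hzV
    set t : ℝ := min (ε / (2 * (‖y - z‖ + 1))) (1/2) with ht
    have hnorm : (0:ℝ) < ‖y - z‖ + 1 := by positivity
    have ht0 : 0 < t := lt_min (by positivity) (by norm_num)
    have ht1 : t < 1 := lt_of_le_of_lt (min_le_right _ _) (by norm_num)
    have hzt : (1 - t) • z + t • y ∈ V := by
      apply hball
      have heq : (1 - t) • z + t • y = z + t • (y - z) := by module
      rw [Metric.mem_ball, heq, dist_eq_norm]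
      have : z + t • (y - z) - z = t • (y - z) := by abel
      rw [this, norm_smul, Real.norm_eq_abs, abs_of_pos ht0]
      calc t * ‖y - z‖ ≤ (ε / (2 * (‖y - z‖ + 1))) * ‖y - z‖ := by
            apply mul_le_mul_of_nonneg_right (min_le_left _ _) (norm_nonneg _)
        _ < ε := by
            rw [div_mul_eq_mul_div, div_lt_iff₀ (by positivity)]
            nlinarith [norm_nonneg (y - z)]
    have hconv := hfconv.2 hzΩ hy (by linarith : (0:ℝ) ≤ 1 - t) ht0.le (by ring)
    have hle : f z ≤ f ((1 - t) • z + t • y) := hzmin _ (subset_closure hzt)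
    simp only [smul_eq_mul] at hconv
    nlinarith [hconv, hle]
  constructor
  · intro p hp
    obtain ⟨x₀, _, x₁, hx₁V, _, hp₁⟩ := key p hp
    simp only [mem_iUnion]
    exact ⟨x₁, hx₁V, hp₁⟩
  · intro p hp
    obtain ⟨x₀, hx₀V, x₁, hx₁V, hp₀, hp₁⟩ := key p hp
    have hx₀Ω : x₀ ∈ Ω := hVΩ (subset_closure hx₀V)
    have hx₁Ω : x₁ ∈ Ω := hVΩ (subset_closure hx₁V)
    have hwL : legendreT Ω w p = ⟪x₀, p⟫ - w x₀ := legendre_eq hx₀Ω hp₀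
    have huL : legendreT Ω u p = ⟪x₁, p⟫ - u x₁ := legendre_eq hx₁Ω hp₁
    constructor
    · have h1 : ⟪x₁, p⟫ - w x₁ ≤ legendreT Ω w p := le_csSup (subgrad_bdd hp₀) ⟨x₁, hx₁Ω, rfl⟩
      have h2 := hupp x₁ hx₁V
      rw [huL]; linarith
    · have h1 : ⟪x₀, p⟫ - u x₀ ≤ legendreT Ω u p := le_csSup (subgrad_bdd hp₁) ⟨x₀, hx₀Ω, rfl⟩
      have h2 := hlow x₀ hx₀V
      rw [hwL]; linarith
end
end

section
/- Let Ω ⊆ ℝⁿ be an open set and let u be a convex function on Ω. Suppose x₀ ∈ Ω lies in the relative interior of a non-degenerate line segment L ⊆ Ω on which u is affine, let p ∈ ∂u(x₀), and suppose there exist constants C > 0 and t₀ > 0 such that |S^u_{t,p}(x₀)| ≤ C·t^{n/2} for all t ∈ (0, t₀). Define w(x) = u(x) + |x|². Then q = p + 2x₀ is a subgradient of w at x₀, and there exist constants C̃ > 0 and t₁ > 0 such that |S^w_{t,q}(x₀)| ≤ C̃·t^{(n+1)/2} for all t ∈ (0, t₁), where |·| is Lebesgue measure. -/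
open MeasureTheory Set
open scoped RealInnerProductSpace ENNReal

noncomputable section

/-- The section `S^u_{t,p}(x₀)` of `u` at `x₀` with height `t` for the subgradient `p`. -/
def maSection {n : ℕ} (Ω : Set (En n)) (u : En n → ℝ) (x₀ p : En n) (t : ℝ) : Set (En n) :=
  {x ∈ Ω | u x < u x₀ + ⟪p, x - x₀⟫ + t}

set_option maxHeartbeats 1000000 in
/-- Lemma 6.3 (Lemma `lem:section n n+1`): at a point of the relative interior of a
segment on which `u` is affine, a decay `|S^u_{t,p}| ≤ C t^{n/2}` improves to
`|S^w_{t,q}| ≤ C̃ t^{(n+1)/2}` for `w = u + |x|²` and `q = p + 2x₀`. -/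
theorem statement_18 {n : ℕ} (Ω : Set (En n)) (hΩo : IsOpen Ω)
    (u : En n → ℝ) (hu : ConvexOn ℝ Ω u)
    (a b : En n) (hab : a ≠ b) (hseg : segment ℝ a b ⊆ Ω)
    (ℓ : En n →ᵃ[ℝ] ℝ) (haff : ∀ x ∈ segment ℝ a b, u x = ℓ x)
    (x₀ : En n) (hx₀ : x₀ ∈ openSegment ℝ a b)
    (p : En n) (hp : p ∈ subgrad Ω u x₀)
    (C t₀ : ℝ) (hC : 0 < C) (ht₀ : 0 < t₀)
    (hsec : ∀ t : ℝ, 0 < t → t < t₀ →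
      volume (maSection Ω u x₀ p t) ≤ ENNReal.ofReal (C * t ^ ((n : ℝ) / 2))) :
    (p + (2 : ℝ) • x₀) ∈ subgrad Ω (fun x => u x + ‖x‖ ^ 2) x₀ ∧
    ∃ Ct t₁ : ℝ, 0 < Ct ∧ 0 < t₁ ∧
      ∀ t : ℝ, 0 < t → t < t₁ →
        volume (maSection Ω (fun x => u x + ‖x‖ ^ 2) x₀ (p + (2 : ℝ) • x₀) t) ≤
          ENNReal.ofReal (Ct * t ^ (((n : ℝ) + 1) / 2)) := by
  classical
  have hΩconv : Convex ℝ Ω := hu.1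
  set q : En n := p + (2 : ℝ) • x₀ with hqdef
  -- expansion of the inner product with q
  have hqin : ∀ y : En n, ⟪q, y - x₀⟫ = ⟪p, y - x₀⟫ + 2 * ⟪x₀, y⟫ - 2 * ⟪x₀, x₀⟫ := by
    intro y
    rw [hqdef, inner_add_left, real_inner_smul_left]
    simp only [inner_sub_right]
    ring
  have hnormsub : ∀ y : En n, ‖y - x₀‖ ^ 2 = ‖y‖ ^ 2 - 2 * ⟪x₀, y⟫ + ‖x₀‖ ^ 2 := by
    intro y
    rw [← real_inner_self_eq_norm_sq, ← real_inner_self_eq_norm_sq,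
      ← real_inner_self_eq_norm_sq, inner_sub_sub_self]
    rw [real_inner_comm y x₀]; ring
  have hx₀x₀ : ⟪x₀, x₀⟫ = ‖x₀‖ ^ 2 := real_inner_self_eq_norm_sq x₀
  -- Part 1: q is a subgradient of w at x₀
  have hsub : q ∈ subgrad Ω (fun x => u x + ‖x‖ ^ 2) x₀ := by
    intro y hy
    have h1 := hp y hy
    have h2 := hnormsub y
    have h3 := hqin y
    have h4 : (0:ℝ) ≤ ‖y - x₀‖ ^ 2 := sq_nonneg _
    simp only
    linarith
  refine ⟨hsub, ?_⟩
  -- setup for part 2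
  obtain ⟨s, r, hs, hr, hsr, hx⟩ := hx₀
  have hx₀seg : x₀ ∈ segment ℝ a b := ⟨s, r, le_of_lt hs, le_of_lt hr, hsr, hx⟩
  have hx₀Ω : x₀ ∈ Ω := hseg hx₀seg
  set d : En n := b - x₀ with hddef
  have hd : d = s • (b - a) := by
    rw [hddef, ← hx]; rw [show s = 1 - r by linarith]; module
  have hd0 : d ≠ 0 := by
    rw [hd]
    simp only [ne_eq, smul_eq_zero, sub_eq_zero]
    push_neg
    exact ⟨ne_of_gt hs, fun h => hab h.symm⟩
  have hD : (0:ℝ) < ‖d‖ := norm_pos_iff.mpr hd0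
  -- points x₀ + τ • d for τ ∈ [0,1] lie in the segment
  have hτseg : ∀ τ : ℝ, 0 ≤ τ → τ ≤ 1 → x₀ + τ • d ∈ segment ℝ a b := by
    intro τ hτ0 hτ1
    refine ⟨s * (1 - τ), (1 - τ) * r + τ, by nlinarith, by nlinarith,
      by linear_combination (1 - τ) * hsr, ?_⟩
    rw [← hx, hddef, ← hx]
    match_scalars <;> ring
  -- the function v(x₀ + τ d) is linear with slope c, and c = 0
  have hℓval : ∀ τ : ℝ, (ℓ (x₀ + τ • d) : ℝ) = ℓ x₀ + τ * ℓ.linear d := by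
    intro τ
    have : x₀ + τ • d = (τ • d) +ᵥ x₀ := by simp [vadd_eq_add]; abel
    rw [this, AffineMap.map_vadd]
    simp [vadd_eq_add, LinearMap.map_smul, smul_eq_mul]; ring
  set c : ℝ := ℓ.linear d - ⟪p, d⟫ with hcdef
  have hux₀ : u x₀ = ℓ x₀ := haff x₀ hx₀seg
  have hvτ : ∀ τ : ℝ, x₀ + τ • d ∈ segment ℝ a b →
      u (x₀ + τ • d) - u x₀ - ⟪p, (x₀ + τ • d) - x₀⟫ = τ * c := by
    intro τ hτ
    rw [haff _ hτ, hℓval, hux₀]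
    have : (x₀ + τ • d) - x₀ = τ • d := by abel
    rw [this, real_inner_smul_right, hcdef]; ring
  have hc0 : c = 0 := by
    have hb : x₀ + (1:ℝ) • d = b := by rw [hddef]; module
    have h1 : u (x₀ + (1:ℝ) • d) - u x₀ - ⟪p, (x₀ + (1:ℝ) • d) - x₀⟫ = 1 * c :=
      hvτ 1 (by rw [hb]; exact right_mem_segment ℝ a b)
    have hbΩ : (0:ℝ) ≤ u b - u x₀ - ⟪p, b - x₀⟫ := by
      have := hp b (hseg (right_mem_segment ℝ a b)); linarith
    rw [hb] at h1
    have hcge : (0:ℝ) ≤ c := by linarith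
    -- other side : a = x₀ + (-(r/s)) • d
    have ha : x₀ + (-(r/s)) • d = a := by
      rw [hd, ← hx]
      have hs' : s ≠ 0 := ne_of_gt hs
      match_scalars <;> field_simp <;> linarith
    have h2 : u (x₀ + (-(r/s)) • d) - u x₀ - ⟪p, (x₀ + (-(r/s)) • d) - x₀⟫ = (-(r/s)) * c :=
      hvτ _ (by rw [ha]; exact left_mem_segment ℝ a b)
    have haΩ : (0:ℝ) ≤ u a - u x₀ - ⟪p, a - x₀⟫ := by
      have := hp a (hseg (left_mem_segment ℝ a b)); linarith
    rw [ha] at h2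
    have hrs : (0:ℝ) < r / s := by positivity
    nlinarith
  -- nonnegativity of v on Ω
  have hv0 : ∀ x ∈ Ω, (0:ℝ) ≤ u x - u x₀ - ⟪p, x - x₀⟫ := by
    intro x hxΩ
    have := hp x hxΩ; linarith
  -- continuity of u on Ω, hence the w-section is open
  have hucont : ContinuousOn u Ω := hu.continuousOn hΩo
  -- main estimate
  refine ⟨2 ^ (n + 1) * C / ‖d‖, t₀, by positivity, ht₀, ?_⟩
  intro t ht ht'
  set st : ℝ := Real.sqrt t with hstdef
  have hst : 0 < st := Real.sqrt_pos.mpr ht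
  have hst2 : st ^ 2 = t := Real.sq_sqrt (le_of_lt ht)
  set Sw : Set (En n) := maSection Ω (fun x => u x + ‖x‖ ^ 2) x₀ q t with hSwdef
  -- membership facts for Sw
  have hSwmem : ∀ x ∈ Sw, x ∈ Ω ∧ u x - u x₀ - ⟪p, x - x₀⟫ + ‖x - x₀‖ ^ 2 < t := by
    intro x hxS
    obtain ⟨hxΩ, hlt⟩ := hxS
    refine ⟨hxΩ, ?_⟩
    simp only at hlt
    have h2 := hnormsub x
    have h3 := hqin x
    linarith
  have hSwnorm : ∀ x ∈ Sw, ‖x - x₀‖ < st := by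
    intro x hxS
    obtain ⟨hxΩ, hlt⟩ := hSwmem x hxS
    have := hv0 x hxΩ
    have hsq : ‖x - x₀‖ ^ 2 < t := by linarith
    nlinarith [norm_nonneg (x - x₀), Real.sqrt_nonneg t]
  -- Sw is open
  have hSwopen : IsOpen Sw := by
    have hinnercont : Continuous fun x : En n => ⟪q, x - x₀⟫ :=
      Continuous.inner continuous_const (continuous_id.sub continuous_const)
    have hg : ContinuousOn (fun x : En n => u x + ‖x‖ ^ 2 -
        (u x₀ + ‖x₀‖ ^ 2 + ⟪q, x - x₀⟫ + t)) Ω := by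
      apply ContinuousOn.sub
      · exact hucont.add (Continuous.continuousOn (by fun_prop))
      · exact Continuous.continuousOn
          ((continuous_const.add hinnercont).add continuous_const)
    have : Sw = Ω ∩ (fun x : En n => u x + ‖x‖ ^ 2 -
        (u x₀ + ‖x₀‖ ^ 2 + ⟪q, x - x₀⟫ + t)) ⁻¹' (Iio 0) := by
      ext x
      simp only [hSwdef, maSection, mem_setOf_eq, mem_inter_iff, mem_preimage, mem_Iio]
      constructor
      · rintro ⟨h1, h2⟩; exact ⟨h1, by linarith⟩
      · rintro ⟨h1, h2⟩; exact ⟨h1, by linarith⟩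
    rw [this]
    exact hg.isOpen_inter_preimage hΩo isOpen_Iio
  -- the translated rescaled copies
  set K : ℕ := ⌊‖d‖ / (2 * st)⌋₊ + 1 with hKdef
  set z : ℕ → En n := fun k => x₀ + (2 * k * st / ‖d‖) • d with hzdef
  set T : ℕ → Set (En n) := fun k => (fun y : En n => (2:ℝ) • y - z k) ⁻¹' Sw with hTdef
  have hzk : ∀ k < K, z k ∈ segment ℝ a b := by
    intro k hk
    apply hτseg
    · positivity
    · have hkfl : (k : ℝ) ≤ ‖d‖ / (2 * st) := by
        have : k ≤ ⌊‖d‖ / (2 * st)⌋₊ := by omega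
        exact_mod_cast le_trans (Nat.cast_le.mpr this) (Nat.floor_le (by positivity))
      rw [div_le_one hD]
      calc 2 * (k:ℝ) * st ≤ 2 * (‖d‖ / (2 * st)) * st := by nlinarith
        _ = ‖d‖ := by field_simp
  have hvz : ∀ k < K, u (z k) - u x₀ - ⟪p, z k - x₀⟫ = 0 := by
    intro k hk
    have := hvτ (2 * k * st / ‖d‖) (hzk k hk)
    rw [hc0, mul_zero] at this
    exact this
  -- each T k is inside the u-section
  have hTsub : ∀ k < K, T k ⊆ maSection Ω u x₀ p t := by
    intro k hk y hy
    simp only [hTdef, mem_preimage] at hy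
    set x : En n := (2:ℝ) • y - z k with hxdef
    obtain ⟨hxΩ, hxv⟩ := hSwmem x hy
    have hzΩ : z k ∈ Ω := hseg (hzk k hk)
    have hy2 : y = (1/2 : ℝ) • z k + (1/2 : ℝ) • x := by
      rw [hxdef]; module
    have hyΩ : y ∈ Ω := by
      rw [hy2]
      exact hΩconv hzΩ hxΩ (by norm_num) (by norm_num) (by norm_num)
    have huy : u y ≤ (1/2:ℝ) * u (z k) + (1/2:ℝ) * u x := by
      have := hu.2 hzΩ hxΩ (by norm_num : (0:ℝ) ≤ 1/2) (by norm_num : (0:ℝ) ≤ 1/2)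
        (by norm_num : (1/2:ℝ) + 1/2 = 1)
      rw [← hy2] at this
      simpa [smul_eq_mul] using this
    have hinner : ⟪p, y - x₀⟫ = (1/2:ℝ) * ⟪p, z k - x₀⟫ + (1/2:ℝ) * ⟪p, x - x₀⟫ := by
      have : y - x₀ = (1/2:ℝ) • (z k - x₀) + (1/2:ℝ) • (x - x₀) := by
        rw [hy2]; module
      rw [this, inner_add_right, real_inner_smul_right, real_inner_smul_right]
    have hvzk := hvz k hk
    have hxv' : u x - u x₀ - ⟪p, x - x₀⟫ < t := by
      nlinarith [sq_nonneg ‖x - x₀‖]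
    refine ⟨hyΩ, ?_⟩
    rw [hinner]
    linarith
  -- pairwise disjoint
  have hTdisj : ∀ j < K, ∀ k < K, j ≠ k → Disjoint (T j) (T k) := by
    intro j hj k hk hjk
    rw [Set.disjoint_left]
    intro y hyj hyk
    simp only [hTdef, mem_preimage] at hyj hyk
    have h1 := hSwnorm _ hyj
    have h2 := hSwnorm _ hyk
    have hdiff : ((2:ℝ) • y - z j) - ((2:ℝ) • y - z k) = ((2 * k * st - 2 * j * st) / ‖d‖) • d := by
      simp only [hzdef]
      have hDne : ‖d‖ ≠ 0 := ne_of_gt hD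
      match_scalars <;> (field_simp; try ring)
    have hnd : ‖((2:ℝ) • y - z j) - ((2:ℝ) • y - z k)‖ = |2 * (k:ℝ) * st - 2 * j * st| := by
      rw [hdiff, norm_smul]
      rw [Real.norm_eq_abs, abs_div, abs_of_nonneg (le_of_lt hD)]
      field_simp
    have hlb : 2 * st ≤ |2 * (k:ℝ) * st - 2 * j * st| := by
      have : |2 * (k:ℝ) * st - 2 * j * st| = 2 * st * |(k:ℝ) - j| := by
        rw [show 2 * (k:ℝ) * st - 2 * j * st = 2 * st * ((k:ℝ) - j) by ring, abs_mul,
          abs_of_pos (by positivity)]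
      rw [this]
      have : (1:ℝ) ≤ |(k:ℝ) - j| := by
        rcases Nat.lt_or_ge j k with h | h
        · have hjk' : (j:ℝ) + 1 ≤ k := by exact_mod_cast h
          rw [abs_of_pos (by linarith)]
          linarith
        · have hkj : k < j := lt_of_le_of_ne h fun h' => hjk h'.symm
          have hkj' : (k:ℝ) + 1 ≤ j := by exact_mod_cast hkj
          rw [abs_of_neg (by linarith)]
          linarith
      nlinarith
    have hub : ‖((2:ℝ) • y - z j) - ((2:ℝ) • y - z k)‖ < 2 * st := by
      calc ‖((2:ℝ) • y - z j) - ((2:ℝ) • y - z k)‖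
          = ‖(((2:ℝ) • y - z j) - x₀) - (((2:ℝ) • y - z k) - x₀)‖ := by rw [sub_sub_sub_cancel_right]
        _ ≤ ‖((2:ℝ) • y - z j) - x₀‖ + ‖((2:ℝ) • y - z k) - x₀‖ := norm_sub_le _ _
        _ < st + st := by exact add_lt_add h1 h2
        _ = 2 * st := by ring
    rw [hnd] at hub
    linarith
  -- volume of T k
  have hTvol : ∀ k : ℕ, volume (T k) = ENNReal.ofReal (((2:ℝ) ^ n)⁻¹) * volume Sw := by
    intro k
    have : T k = (fun y : En n => (2:ℝ) • y) ⁻¹' ((fun w : En n => w + (-(z k))) ⁻¹' Sw) := by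
      ext y
      simp [hTdef, sub_eq_add_neg]
    rw [this, Measure.addHaar_preimage_smul volume (two_ne_zero) _,
      measure_preimage_add_right volume (-(z k)) Sw]
    congr 2
    rw [finrank_euclideanSpace_fin]
    rw [abs_of_pos (by positivity)]
  -- summing up
  have hSwm : MeasurableSet Sw := hSwopen.measurableSet
  have hTm : ∀ k : ℕ, MeasurableSet (T k) := by
    intro k
    have hcont : Continuous fun y : En n => (2:ℝ) • y - z k := by fun_prop
    exact (hSwopen.preimage hcont).measurableSet
  have hunion : (⋃ k ∈ Finset.range K, T k) ⊆ maSection Ω u x₀ p t := by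
    intro y hy
    simp only [Finset.mem_range, mem_iUnion] at hy
    obtain ⟨k, hk, hyk⟩ := hy
    exact hTsub k hk hyk
  have hsum : (K : ℝ≥0∞) * (ENNReal.ofReal (((2:ℝ) ^ n)⁻¹) * volume Sw)
      ≤ ENNReal.ofReal (C * t ^ ((n : ℝ) / 2)) := by
    have hmeas : volume (⋃ k ∈ Finset.range K, T k)
        = ∑ k ∈ Finset.range K, volume (T k) := by
      apply measure_biUnion_finset
      · intro j hj k hk hjk
        simp only [Finset.coe_range, mem_Iio] at hj hk
        exact hTdisj j hj k hk hjk
      · intro k _; exact hTm k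
    have : ∑ k ∈ Finset.range K, volume (T k)
        = (K : ℝ≥0∞) * (ENNReal.ofReal (((2:ℝ) ^ n)⁻¹) * volume Sw) := by
      rw [Finset.sum_congr rfl (fun k _ => hTvol k)]
      simp [Finset.sum_const, nsmul_eq_mul]
    rw [← this, ← hmeas]
    exact le_trans (measure_mono hunion) (hsec t ht (lt_of_lt_of_le ht' (le_refl t₀)))
  -- conclude
  have haux : (K : ℝ≥0∞) * ENNReal.ofReal (((2:ℝ) ^ n)⁻¹) ≠ 0 := by
    apply mul_ne_zero
    · simp [hKdef]
    · simp only [ne_eq, ENNReal.ofReal_eq_zero, not_le]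
      positivity
  have haux2 : (K : ℝ≥0∞) * ENNReal.ofReal (((2:ℝ) ^ n)⁻¹) ≠ ⊤ := by
    apply ENNReal.mul_ne_top (ENNReal.natCast_ne_top K) ENNReal.ofReal_ne_top
  rw [← ENNReal.mul_le_mul_iff_right haux haux2]
  calc (K : ℝ≥0∞) * ENNReal.ofReal (((2:ℝ) ^ n)⁻¹) * volume Sw
      = (K : ℝ≥0∞) * (ENNReal.ofReal (((2:ℝ) ^ n)⁻¹) * volume Sw) := by ring
    _ ≤ ENNReal.ofReal (C * t ^ ((n : ℝ) / 2)) := hsum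
    _ ≤ (K : ℝ≥0∞) * ENNReal.ofReal (((2:ℝ) ^ n)⁻¹) *
        ENNReal.ofReal (2 ^ (n + 1) * C / ‖d‖ * t ^ (((n : ℝ) + 1) / 2)) := by
      rw [show ((K : ℝ≥0∞)) = ENNReal.ofReal (K : ℝ) by simp,
        ← ENNReal.ofReal_mul (by positivity), ← ENNReal.ofReal_mul (by positivity)]
      apply ENNReal.ofReal_le_ofReal
      -- real inequality
      have hKlb : ‖d‖ / (2 * st) ≤ (K : ℝ) := by
        have := Nat.lt_floor_add_one (‖d‖ / (2 * st))
        rw [hKdef]; push_cast; linarith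
      have hrpow : t ^ (((n:ℝ) + 1) / 2) = t ^ ((n:ℝ)/2) * st := by
        rw [hstdef, Real.sqrt_eq_rpow, ← Real.rpow_add ht]
        ring_nf
      rw [hrpow]
      have htpow : (0:ℝ) < t ^ ((n:ℝ)/2) := Real.rpow_pos_of_pos ht _
      have h2n : (0:ℝ) < (2:ℝ)^n := by positivity
      have hKpos : (0:ℝ) < K := by
        rw [hKdef]; push_cast; positivity
      have key : C ≤ (K:ℝ) * ((2:ℝ)^n)⁻¹ * (2 ^ (n+1) * C / ‖d‖) * st := by
        have h1 : (K:ℝ) * ((2:ℝ)^n)⁻¹ * (2 ^ (n+1) * C / ‖d‖) * st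
            = (K:ℝ) * st * (2 * C / ‖d‖) := by
          rw [pow_succ]
          field_simp
        rw [h1]
        have h2 : ‖d‖ / (2 * st) * st ≤ (K:ℝ) * st := by nlinarith
        have h3 : ‖d‖ / (2 * st) * st = ‖d‖ / 2 := by field_simp
        rw [h3] at h2
        calc C = (‖d‖/2) * (2 * C / ‖d‖) := by field_simp
          _ ≤ (K:ℝ) * st * (2 * C / ‖d‖) := by
            apply mul_le_mul_of_nonneg_right h2 (by positivity)
      nlinarith
  done
end
end

section
/- Let δ > 0 and let ζ : (−δ, δ) → ℝ be a C² function satisfying 2ζ(s)ζ''(s) − 4ζ'(s)² = 1 for all s ∈ (−δ, δ), with ζ(0) > 0 and ζ'(0) = 0. Define w(y, s) = y²·ζ(s) for (y, s) ∈ ℝ². Then there exists c₀ > 0 such that w is convex on the open ball B_{c₀}(0) ⊆ ℝ² and the determinant of the Hessian of w satisfies det D²w(y, s) = y² for all (y, s) ∈ B_{c₀}(0). -/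
/-!
Writing `w(y, s) = y² / u(s)` with `u = 1 / ζ`, the equation `2ζζ'' − 4ζ'² = 1` says exactly
that `u'' = −1 / (2ζ³) < 0`, so `u` is a positive concave function near `0`. Since the
quadratic-over-linear function `(y, t) ↦ y² / t` is jointly convex on `t > 0` and decreasing in
`t`, its composition with `(y, s) ↦ (y, u(s))` is convex. The Hessian determinant of `y² ζ(s)`
is `y² (2ζζ'' − 4ζ'²)`, which the equation turns into `y²`.
-/

open Set Metric Topology

theorem convexOn_sq_div : ConvexOn ℝ (univ ×ˢ Ioi 0) fun p : ℝ × ℝ => p.1 ^ 2 / p.2 := by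
  refine ⟨convex_univ.prod (convex_Ioi 0), ?_⟩
  rintro ⟨y₁, t₁⟩ ⟨-, ht₁ : 0 < t₁⟩ ⟨y₂, t₂⟩ ⟨-, ht₂ : 0 < t₂⟩ a b ha hb hab
  simp only [Prod.smul_mk, Prod.mk_add_mk, smul_eq_mul]
  have ht : 0 < a * t₁ + b * t₂ := convex_Ioi (0 : ℝ) ht₁ ht₂ ha hb hab
  have hsplit : a * (y₁ ^ 2 / t₁) + b * (y₂ ^ 2 / t₂) =
      (a * y₁ ^ 2 * t₂ + b * y₂ ^ 2 * t₁) / (t₁ * t₂) := by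
    field_simp
  rw [div_le_iff₀ ht, hsplit, div_mul_eq_mul_div, le_div_iff₀ (by positivity)]
  -- the difference of the two sides is `a b (y₁ t₂ − y₂ t₁)²`, using `a + b = 1`
  nlinarith [mul_nonneg (mul_nonneg ha hb) (sq_nonneg (y₁ * t₂ - y₂ * t₁))]

theorem convexOn_sq_div_of_concaveOn {s : Set ℝ} {u : ℝ → ℝ} (hu : ConcaveOn ℝ s u)
    (hpos : ∀ x ∈ s, 0 < u x) : ConvexOn ℝ (univ ×ˢ s) fun p : ℝ × ℝ => p.1 ^ 2 / u p.2 := by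
  refine ⟨convex_univ.prod hu.1, ?_⟩
  rintro ⟨y₁, s₁⟩ ⟨-, hs₁⟩ ⟨y₂, s₂⟩ ⟨-, hs₂⟩ a b ha hb hab
  simp only [Prod.smul_mk, Prod.mk_add_mk, smul_eq_mul]
  calc (a * y₁ + b * y₂) ^ 2 / u (a * s₁ + b * s₂)
      ≤ (a * y₁ + b * y₂) ^ 2 / (a * u s₁ + b * u s₂) :=
        div_le_div_of_nonneg_left (sq_nonneg _)
          (convex_Ioi (0 : ℝ) (hpos s₁ hs₁) (hpos s₂ hs₂) ha hb hab) (hu.2 hs₁ hs₂ ha hb hab)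
    _ ≤ a * (y₁ ^ 2 / u s₁) + b * (y₂ ^ 2 / u s₂) := by
        simpa using convexOn_sq_div.2 (x := (y₁, u s₁)) (y := (y₂, u s₂))
          ⟨trivial, hpos s₁ hs₁⟩ ⟨trivial, hpos s₂ hs₂⟩ ha hb hab

theorem concaveOn_inv_of_two_mul_sq_deriv_le {D : Set ℝ} (hD : Convex ℝ D)
    {f f' f'' : ℝ → ℝ} (hf : ∀ x ∈ D, HasDerivAt f (f' x) x)
    (hf' : ∀ x ∈ D, HasDerivAt f' (f'' x) x) (hpos : ∀ x ∈ D, 0 < f x)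
    (hle : ∀ x ∈ D, 2 * f' x ^ 2 ≤ f x * f'' x) :
    ConcaveOn ℝ D fun x => (f x)⁻¹ := by
  have hinv : ∀ x ∈ D, HasDerivAt (fun x => (f x)⁻¹) (-f' x / f x ^ 2) x := fun x hx =>
    (hf x hx).inv (hpos x hx).ne'
  have hinv' : ∀ x ∈ D, HasDerivAt (fun x => -f' x / f x ^ 2)
      ((2 * f' x ^ 2 - f x * f'' x) / f x ^ 3) x := by
    intro x hx
    have hx0 : f x ≠ 0 := (hpos x hx).ne'
    refine ((hf' x hx).fun_neg.fun_div ((hf x hx).fun_pow 2) (pow_ne_zero 2 hx0)).congr_deriv ?_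
    field_simp
    ring
  refine concaveOn_of_hasDerivWithinAt2_nonpos hD
    (fun x hx => (hinv x hx).continuousAt.continuousWithinAt)
    (fun x hx => (hinv x (interior_subset hx)).hasDerivWithinAt)
    (fun x hx => (hinv' x (interior_subset hx)).hasDerivWithinAt) fun x hx => ?_
  replace hx := interior_subset hx
  exact div_nonpos_of_nonpos_of_nonneg (by linarith [hle x hx]) (pow_pos (hpos x hx) 3).le

theorem det_hessian_sq_mul (ζ : ℝ → ℝ) (y₀ s₀ : ℝ) :
    deriv (fun y => deriv (fun y' => y' ^ 2 * ζ s₀) y) y₀ *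
        deriv (fun s => deriv (fun s' => y₀ ^ 2 * ζ s') s) s₀ -
      deriv (fun y => deriv (fun s => y ^ 2 * ζ s) s₀) y₀ ^ 2 =
    y₀ ^ 2 * (2 * ζ s₀ * deriv (deriv ζ) s₀ - 4 * deriv ζ s₀ ^ 2) := by
  simp only [deriv_const_mul_field', deriv_mul_const_field', deriv_pow_field]
  simp only [Nat.cast_ofNat, Nat.add_one_sub_one, Nat.cast_one, tsub_self, pow_zero, mul_one,
    pow_one]
  ring

theorem convex_setOf_sq_add_sq_lt (c : ℝ) :
    Convex ℝ {p : ℝ × ℝ | p.1 ^ 2 + p.2 ^ 2 < c ^ 2} := by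
  simpa using (((even_two.convexOn_pow (𝕜 := ℝ)).comp_linearMap (LinearMap.fst ℝ ℝ ℝ)).add
    ((even_two.convexOn_pow (𝕜 := ℝ)).comp_linearMap (LinearMap.snd ℝ ℝ ℝ))).convex_lt (c ^ 2)

theorem statement_19_general (δ : ℝ) (hδ : 0 < δ) (ζ : ℝ → ℝ)
    (hζC2 : ContDiffOn ℝ 2 ζ (Set.Ioo (-δ) δ))
    (hode : ∀ s ∈ Set.Ioo (-δ) δ, 2 * ζ s * deriv (deriv ζ) s - 4 * (deriv ζ s) ^ 2 = 1)
    (hζ0 : 0 < ζ 0)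
    (w : ℝ × ℝ → ℝ) (hw : ∀ p : ℝ × ℝ, w p = p.1 ^ 2 * ζ p.2) :
    ∃ c₀ : ℝ, 0 < c₀ ∧
      ConvexOn ℝ {p : ℝ × ℝ | p.1 ^ 2 + p.2 ^ 2 < c₀ ^ 2} w ∧
      ∀ p : ℝ × ℝ, p.1 ^ 2 + p.2 ^ 2 < c₀ ^ 2 →
        (deriv (fun y => deriv (fun y' => w (y', p.2)) y) p.1) *
            (deriv (fun s => deriv (fun s' => w (p.1, s')) s) p.2) -
          (deriv (fun y => deriv (fun s => w (y, s)) p.2) p.1) ^ 2 = p.1 ^ 2 := by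
  obtain rfl : w = fun p => p.1 ^ 2 * ζ p.2 := funext hw
  have hI : Ioo (-δ) δ ∈ 𝓝 0 := Ioo_mem_nhds (by linarith) hδ
  have hζ : ∀ s ∈ Ioo (-δ) δ, HasDerivAt ζ (deriv ζ s) s := fun s hs =>
    ((hζC2.differentiableOn two_ne_zero).differentiableAt (isOpen_Ioo.mem_nhds hs)).hasDerivAt
  have hζ' : ∀ s ∈ Ioo (-δ) δ, HasDerivAt (deriv ζ) (deriv (deriv ζ) s) s := fun s hs =>
    (((hζC2.deriv_of_isOpen isOpen_Ioo (by norm_num)).differentiableOn one_ne_zero).differentiableAt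
      (isOpen_Ioo.mem_nhds hs)).hasDerivAt
  obtain ⟨ε, hε, hball⟩ : ∃ ε > 0, ball 0 ε ⊆ {s | s ∈ Ioo (-δ) δ ∧ 0 < ζ s} :=
    mem_nhds_iff.1 (Filter.inter_mem hI
      ((hζC2.continuousOn.continuousAt hI).eventually (eventually_gt_nhds hζ0)))
  have hdisk : {p : ℝ × ℝ | p.1 ^ 2 + p.2 ^ 2 < ε ^ 2} ⊆ univ ×ˢ ball 0 ε := fun p hp => by
    refine ⟨trivial, ?_⟩
    rw [mem_ball, dist_zero_right, Real.norm_eq_abs]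
    exact abs_lt_of_sq_lt_sq (by nlinarith [sq_nonneg p.1, hp.out]) hε.le
  refine ⟨ε, hε, ?_, fun p hp => ?_⟩
  · have hconc : ConcaveOn ℝ (ball 0 ε) fun s => (ζ s)⁻¹ :=
      concaveOn_inv_of_two_mul_sq_deriv_le (convex_ball 0 ε) (fun s hs => hζ s (hball hs).1)
        (fun s hs => hζ' s (hball hs).1) (fun s hs => (hball hs).2)
        (fun s hs => by linarith [hode s (hball hs).1])
    convert (convexOn_sq_div_of_concaveOn hconc fun s hs => inv_pos.2 (hball hs).2).subset
      hdisk (convex_setOf_sq_add_sq_lt ε) using 2 with p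
    rw [div_inv_eq_mul]
  · simpa [hode p.2 (hball (hdisk hp).2).1] using det_hessian_sq_mul ζ p.1 p.2

/-- Example A.2 (Example `exa:2 SW`, after Sawyer–Wheeden): if `ζ` solves
`2ζζ'' − 4ζ'² = 1` with `ζ(0) > 0`, `ζ'(0) = 0`, then `w(y,s) = y²ζ(s)` is convex near
the origin and `det D²w(y,s) = y²` there. -/
theorem statement_19 (δ : ℝ) (hδ : 0 < δ) (ζ : ℝ → ℝ)
    (hζC2 : ContDiffOn ℝ 2 ζ (Set.Ioo (-δ) δ))
    (hode : ∀ s ∈ Set.Ioo (-δ) δ, 2 * ζ s * deriv (deriv ζ) s - 4 * (deriv ζ s) ^ 2 = 1)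
    (hζ0 : 0 < ζ 0) (hζ'0 : deriv ζ 0 = 0)
    (w : ℝ × ℝ → ℝ) (hw : ∀ p : ℝ × ℝ, w p = p.1 ^ 2 * ζ p.2) :
    ∃ c₀ : ℝ, 0 < c₀ ∧
      ConvexOn ℝ {p : ℝ × ℝ | p.1 ^ 2 + p.2 ^ 2 < c₀ ^ 2} w ∧
      ∀ p : ℝ × ℝ, p.1 ^ 2 + p.2 ^ 2 < c₀ ^ 2 →
        (deriv (fun y => deriv (fun y' => w (y', p.2)) y) p.1) *
            (deriv (fun s => deriv (fun s' => w (p.1, s')) s) p.2) -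
          (deriv (fun y => deriv (fun s => w (y, s)) p.2) p.1) ^ 2 = p.1 ^ 2 :=
  statement_19_general δ hδ ζ hζC2 hode hζ0 w hw
end
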